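/- arXiv:2605.14010 — 7 statements merged into one kernel-verified Lean document; each statement's English description precedes it below -/
import Mathlib

section
/- Let (c₁,…,c_{2m}) be a tuple of natural numbers. Then sgn(c₁,…,c_{2m}) = Σ_{π ∈ Π_{2m}} sgn(π(1),…,π(2m)) · ∏_{l=1}^{m} sgn(c_{π(2l-1)}, c_{π(2l)}), where Π_{2m} is the set of permutations π of {1,…,2m} satisfying π(1) < π(3) < ⋯ < π(2m-1) and π(2l-1) < π(2l) for all 1 ≤ l ≤ m. -/
open Matrix Finset

/-- `sgn2 i j` is the sign of the pair `(i, j)`: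
`0` if `i = j`, `1` if `i < j`, `-1` if `i > j`. -/
def sgn2 (i j : ℕ) : ℤ := if i = j then 0 else if i < j then 1 else -1

/-- The sign of a tuple `(c 0, …, c (n-1))` of natural numbers: `0` if two entries
coincide, otherwise `(-1)` to the number of inversions. -/
def sgnTuple {n : ℕ} (c : Fin n → ℕ) : ℤ :=
  if Function.Injective c then
    (-1) ^ (Finset.univ.filter
      (fun p : Fin n × Fin n => p.1 < p.2 ∧ c p.2 < c p.1)).card
  else 0

/-- The matrix `D⁽ⁿ⁾` with `(i,j)` entry `(-1)^{i+j} ⬝ sgn(i,j)` (`1`-based indices). -/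
def Dmat (F : Type*) [Field F] (n : ℕ) : Matrix (Fin n) (Fin n) F :=
  Matrix.of fun i j =>
    (-1 : F) ^ (((i : ℕ) + 1) + ((j : ℕ) + 1)) * ((sgn2 ((i : ℕ) + 1) ((j : ℕ) + 1) : ℤ) : F)

/-- The permutations `π ∈ Π_{2m}`: (1-based) `π(1) < π(3) < ⋯ < π(2m-1)` and
`π(2l-1) < π(2l)` for all `1 ≤ l ≤ m`. -/
def IsPfPerm {m : ℕ} (π : Equiv.Perm (Fin (2 * m))) : Prop :=
  (∀ l : Fin m, π ⟨2 * l.val, by omega⟩ < π ⟨2 * l.val + 1, by omega⟩) ∧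
  (∀ l l' : Fin m, l < l' → π ⟨2 * l.val, by omega⟩ < π ⟨2 * l'.val, by omega⟩)

instance {m : ℕ} : DecidablePred (@IsPfPerm m) := fun π => by
  unfold IsPfPerm; infer_instance

/-- The Pfaffian of a `2m × 2m` matrix, defined as
`∑_{π ∈ Π_{2m}} sgn(π) ∏_{l=1}^{m} a_{π(2l-1) π(2l)}`. -/
def pfaffian {F : Type*} [Field F] (m : ℕ) (A : Matrix (Fin (2 * m)) (Fin (2 * m)) F) : F :=
  ∑ π ∈ Finset.univ.filter (fun π : Equiv.Perm (Fin (2 * m)) => IsPfPerm π),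
    ((Equiv.Perm.sign π : ℤ) : F) *
      ∏ l : Fin m, A (π ⟨2 * l.val, by omega⟩) (π ⟨2 * l.val + 1, by omega⟩)

/-- The Cullis determinant of an `n × k` matrix (`n ≥ k`):
`(-1)^{1+⋯+k} ∑_{1 ≤ c₁ < ⋯ < c_k ≤ n} (-1)^{c₁+⋯+c_k} det X[c₁,…,c_k | 1,…,k]`. -/
def cullisDet {F : Type*} [Field F] (n k : ℕ) (X : Matrix (Fin n) (Fin k) F) : F :=
  (-1 : F) ^ (∑ j ∈ Finset.range k, (j + 1)) *
    ∑ c ∈ Finset.univ.filter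
        (fun c : Fin k → Fin n => ∀ i j : Fin k, i < j → c i < c j),
      (-1 : F) ^ (∑ i : Fin k, ((c i : ℕ) + 1)) * (X.submatrix c id).det

/-- The matrix `SGN(c₁,…,c_n)` with `(i,j)` entry `sgn(c_i, c_j)`, over a field. -/
def SGNmat (F : Type*) [Field F] {n : ℕ} (c : Fin n → ℕ) : Matrix (Fin n) (Fin n) F :=
  Matrix.of fun i j => ((sgn2 (c i) (c j) : ℤ) : F)

/-- The permutation matrix `P^π` with `(i,j)` entry `1` if `j = π i` and `0` otherwise. -/
def Pmat (F : Type*) [Field F] {n : ℕ} (π : Equiv.Perm (Fin n)) : Matrix (Fin n) (Fin n) F :=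
  Matrix.of fun i j => if j = π i then (1 : F) else 0

/-- The increasing enumeration of the complement of `{i, j}` in `Fin N`
(used to delete rows/columns `i` and `j`). -/
def delTwo {N M : ℕ} (i j : Fin N) : Fin M → Fin N :=
  fun l => (Finset.sort ({i, j}ᶜ : Finset (Fin N)) (· ≤ ·)).getD (l : ℕ) i

/-- The increasing enumeration of the complement of `{i}` in `Fin N`
(used to delete row/column `i`). -/
def delOne {N M : ℕ} (i : Fin N) : Fin M → Fin N :=
  fun l => (Finset.sort ({i}ᶜ : Finset (Fin N)) (· ≤ ·)).getD (l : ℕ) i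

/-- Append a final column of `1`'s to a matrix (the matrix `X'`). -/
def appendOnes {F : Type*} [Field F] {n k K : ℕ} (X : Matrix (Fin n) (Fin k) F) :
    Matrix (Fin n) (Fin K) F :=
  Matrix.of fun i j => if h : (j : ℕ) < k then X i ⟨(j : ℕ), h⟩ else 1

/-- Append a final row of `0`'s and then a final column of `1`'s (the matrix `X''`). -/
def appendZerosOnes {F : Type*} [Field F] {n k N K : ℕ} (X : Matrix (Fin n) (Fin k) F) :
    Matrix (Fin N) (Fin K) F :=
  Matrix.of fun i j =>
    if hj : (j : ℕ) < k then
      (if hi : (i : ℕ) < n then X ⟨(i : ℕ), hi⟩ ⟨(j : ℕ), hj⟩ else 0)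
    else 1


/-!
The right-hand side is the Pfaffian of the skew-symmetric matrix `SGN(c) = (sgn(c_i, c_j))`.
Both `sgn(c)` and `Pf(SGN(c))` get multiplied by `sign ρ` when `c` is replaced by `c ∘ ρ`. For the
Pfaffian this holds because `Π_{2m}` contains exactly one permutation from each left coset of the
hyperoctahedral group of permutations preserving the blocks `{2l, 2l+1}`, and the Pfaffian terms are
constant on these cosets. If `c_i = c_j` with `i ≠ j`, this rule with `ρ = (i j)` gives
`Pf = -Pf = 0`. For injective `c` it reduces the claim to `Pf(SGN(0, 1, …, 2m-1)) = 1`. To prove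
that, merge `2k` and `2k+1` for each `k` in a set `K`. For `K ≠ ∅` the Pfaffian vanishes, and the
term of `π` survives exactly when `π` pairs no such `2k` with `2k+1`. Inclusion–exclusion over `K`
then leaves only `π = 1`.
-/

open Equiv Equiv.Perm

section Sgn

theorem sgn2_of_lt {i j : ℕ} (h : i < j) : sgn2 i j = 1 := by
  simp [sgn2, h, h.ne]

theorem sgn2_of_gt {i j : ℕ} (h : j < i) : sgn2 i j = -1 := by
  simp [sgn2, h.ne', h.not_gt]

@[simp] theorem sgn2_self (i : ℕ) : sgn2 i i = 0 := by
  simp [sgn2]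

theorem sgn2_comm (i j : ℕ) : sgn2 j i = -sgn2 i j := by
  rcases lt_trichotomy i j with h | rfl | h
  · rw [sgn2_of_lt h, sgn2_of_gt h]
  · simp
  · rw [sgn2_of_gt h, sgn2_of_lt h, neg_neg]

theorem sgn2_comp_strictMono {α : Type*} [LinearOrder α] {f : α → ℕ} {g : α → ℕ}
    (hf : StrictMono f) (hg : StrictMono g) (a b : α) : sgn2 (f a) (f b) = sgn2 (g a) (g b) := by
  rcases lt_trichotomy a b with h | rfl | h
  · rw [sgn2_of_lt (hf h), sgn2_of_lt (hg h)]
  · simp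
  · rw [sgn2_of_gt (hf h), sgn2_of_gt (hg h)]

theorem sgnTuple_eq_prod {n : ℕ} (c : Fin n → ℕ) :
    sgnTuple c = ∏ j, ∏ i ∈ Finset.Iio j, sgn2 (c i) (c j) := by
  suffices sgnTuple c = ∏ p ∈ Finset.univ.filter (fun p : Fin n × Fin n => p.1 < p.2),
      sgn2 (c p.1) (c p.2) by
    rw [this, Finset.prod_filter, Fintype.prod_prod_type, Finset.prod_comm]
    simp only [← Finset.prod_filter, Finset.filter_gt_eq_Iio]
  by_cases hc : Function.Injective c
  · have hterm : ∀ p ∈ Finset.univ.filter (fun p : Fin n × Fin n => p.1 < p.2),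
        sgn2 (c p.1) (c p.2) = if c p.2 < c p.1 then -1 else 1 := by
      intro p hp
      have hne : c p.1 ≠ c p.2 := hc.ne (Finset.mem_filter.mp hp).2.ne
      split_ifs with h
      · exact sgn2_of_gt h
      · exact sgn2_of_lt (lt_of_le_of_ne (not_lt.mp h) hne)
    rw [sgnTuple, if_pos hc, Finset.prod_congr rfl hterm, Finset.prod_ite, Finset.prod_const,
      Finset.prod_const_one, mul_one, Finset.filter_filter]
  · obtain ⟨i, j, hij, hne⟩ := Function.not_injective_iff.mp hc
    rw [sgnTuple, if_neg hc, eq_comm]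
    rcases hne.lt_or_gt with h | h
    · exact Finset.prod_eq_zero (i := (i, j)) (by simp [h]) (by simp [hij])
    · exact Finset.prod_eq_zero (i := (j, i)) (by simp [h]) (by simp [hij])

theorem sgnTuple_comp_perm {n : ℕ} (c : Fin n → ℕ) (σ : Perm (Fin n)) :
    sgnTuple (c ∘ σ) = sign σ * sgnTuple c := by
  simp only [sgnTuple_eq_prod, Function.comp_apply]
  exact prod_Iio_comp_eq_sign_mul_prod σ fun i j => sgn2_comm (c j) (c i)

theorem sgnTuple_of_strictMono {n : ℕ} {c : Fin n → ℕ} (hc : StrictMono c) : sgnTuple c = 1 := by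
  rw [sgnTuple_eq_prod]
  exact Finset.prod_eq_one fun j _ => Finset.prod_eq_one fun i hi =>
    sgn2_of_lt (hc (Finset.mem_Iio.mp hi))

theorem sgnTuple_perm {n : ℕ} (π : Perm (Fin n)) : sgnTuple (fun i => (π i : ℕ)) = sign π := by
  rw [show (fun i => (π i : ℕ)) = Fin.val ∘ π from rfl, sgnTuple_comp_perm,
    sgnTuple_of_strictMono Fin.val_strictMono, mul_one]

end Sgn

section Blocks

variable {m : ℕ}

def pairEquiv (m : ℕ) : Fin m × Fin 2 ≃ Fin (2 * m) :=
  finProdFinEquiv.trans (finCongr (Nat.mul_comm m 2))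

@[simp] theorem pairEquiv_val (p : Fin m × Fin 2) : (pairEquiv m p : ℕ) = 2 * p.1 + p.2 := by
  simp [pairEquiv, finProdFinEquiv]; ring

def pairFst (l : Fin m) : Fin (2 * m) := ⟨2 * l, by omega⟩

def pairSnd (l : Fin m) : Fin (2 * m) := ⟨2 * l + 1, by omega⟩

@[simp] theorem pairEquiv_zero (l : Fin m) : pairEquiv m (l, 0) = pairFst l := by
  ext; simp [pairFst]

@[simp] theorem pairEquiv_one (l : Fin m) : pairEquiv m (l, 1) = pairSnd l := by
  ext; simp [pairSnd]

theorem pairFst_lt_pairSnd (l : Fin m) : pairFst l < pairSnd l := by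
  rw [Fin.lt_def]; simp [pairFst, pairSnd]

theorem pairFst_strictMono : StrictMono (pairFst : Fin m → Fin (2 * m)) := by
  intro a b h
  rw [Fin.lt_def] at h ⊢; simp [pairFst]; omega

theorem perm_fin_two (e : Perm (Fin 2)) : e = 1 ∨ e = swap 0 1 := by
  revert e; decide

/- Under `pairEquiv` this is `(l, j) ↦ (τ l, ε l j)`: these are the hyperoctahedral permutations,
which preserve the partition of `Fin (2 * m)` into the blocks `{2l, 2l+1}`. -/
def blockPerm (τ : Perm (Fin m)) (ε : Fin m → Perm (Fin 2)) : Perm (Fin (2 * m)) :=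
  (pairEquiv m).permCongr (prodCongrLeft (fun _ => τ) * prodCongrRight ε)

theorem blockPerm_pairEquiv (τ : Perm (Fin m)) (ε : Fin m → Perm (Fin 2)) (l : Fin m) (j : Fin 2) :
    blockPerm τ ε (pairEquiv m (l, j)) = pairEquiv m (τ l, ε l j) := by
  simp [blockPerm, Equiv.permCongr_apply]

theorem blockPerm_pairFst (τ : Perm (Fin m)) (ε : Fin m → Perm (Fin 2)) (l : Fin m) :
    blockPerm τ ε (pairFst l) = pairEquiv m (τ l, ε l 0) := by
  rw [← pairEquiv_zero, blockPerm_pairEquiv]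

theorem blockPerm_pairSnd (τ : Perm (Fin m)) (ε : Fin m → Perm (Fin 2)) (l : Fin m) :
    blockPerm τ ε (pairSnd l) = pairEquiv m (τ l, ε l 1) := by
  rw [← pairEquiv_one, blockPerm_pairEquiv]

@[simp] theorem blockPerm_one : blockPerm (1 : Perm (Fin m)) (fun _ => 1) = 1 := by
  ext x
  obtain ⟨⟨l, j⟩, rfl⟩ := (pairEquiv m).surjective x
  simp [blockPerm_pairEquiv]

theorem blockPerm_mul (τ τ' : Perm (Fin m)) (ε ε' : Fin m → Perm (Fin 2)) :
    blockPerm τ ε * blockPerm τ' ε' = blockPerm (τ * τ') (fun l => ε (τ' l) * ε' l) := by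
  ext x
  obtain ⟨⟨l, j⟩, rfl⟩ := (pairEquiv m).surjective x
  simp [blockPerm_pairEquiv]

theorem sign_blockPerm (τ : Perm (Fin m)) (ε : Fin m → Perm (Fin 2)) :
    sign (blockPerm τ ε) = ∏ l, sign (ε l) := by
  rw [blockPerm, sign_permCongr, Perm.sign_mul, sign_prodCongrLeft, sign_prodCongrRight,
    Fin.prod_univ_two, Int.units_mul_self, one_mul]

end Blocks

section PfPerm

variable {m : ℕ}

theorem isPfPerm_iff (π : Perm (Fin (2 * m))) :
    IsPfPerm π ↔ (∀ l, π (pairFst l) < π (pairSnd l)) ∧ StrictMono (fun l => π (pairFst l)) :=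
  Iff.rfl

theorem isPfPerm_one : IsPfPerm (1 : Perm (Fin (2 * m))) :=
  (isPfPerm_iff 1).mpr ⟨pairFst_lt_pairSnd, pairFst_strictMono⟩

theorem mul_blockPerm_eq_self {π : Perm (Fin (2 * m))} {τ : Perm (Fin m)}
    {ε : Fin m → Perm (Fin 2)} (hπ : IsPfPerm π) (h : IsPfPerm (π * blockPerm τ ε)) :
    π * blockPerm τ ε = π := by
  obtain ⟨hpair, hmono⟩ := (isPfPerm_iff π).mp hπ
  obtain ⟨hpair', hmono'⟩ := (isPfPerm_iff _).mp h
  have hε : ε = fun _ => 1 := by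
    funext l
    have hl := hpair' l
    rw [Perm.mul_apply, Perm.mul_apply, blockPerm_pairFst, blockPerm_pairSnd] at hl
    rcases perm_fin_two (ε l) with he | he
    · exact he
    · simp only [he, swap_apply_left, swap_apply_right, pairEquiv_zero, pairEquiv_one] at hl
      exact absurd (hpair (τ l)) hl.not_gt
  subst hε
  have hτ : τ = 1 := by
    have hτmono : StrictMono τ := fun a b hab => by
      have hab' := hmono' hab
      simp only [Perm.mul_apply, blockPerm_pairFst, Perm.one_apply, pairEquiv_zero] at hab'
      exact hmono.lt_iff_lt.mp hab'
    exact Equiv.ext (congrFun hτmono.eq_id)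
  rw [hτ, blockPerm_one, mul_one]

theorem exists_mul_blockPerm_isPfPerm (σ : Perm (Fin (2 * m))) :
    ∃ τ ε, IsPfPerm (σ * blockPerm τ ε) := by
  let orient : Fin m → Perm (Fin 2) := fun k =>
    if σ (pairFst k) < σ (pairSnd k) then 1 else swap 0 1
  let low : Fin m → Fin (2 * m) := fun k => σ (pairEquiv m (k, orient k 0))
  have hlow_lt : ∀ k, low k < σ (pairEquiv m (k, orient k 1)) := by
    intro k
    simp only [low, orient]
    split_ifs with h
    · simpa using h
    · simp only [swap_apply_left, swap_apply_right, pairEquiv_zero, pairEquiv_one]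
      exact lt_of_le_of_ne (not_lt.mp h) (σ.injective.ne (pairFst_lt_pairSnd k).ne')
  have hlow_inj : Function.Injective low := fun a b h =>
    congrArg Prod.fst ((pairEquiv m).injective (σ.injective h))
  have hsorted : StrictMono (low ∘ Tuple.sort low) :=
    (Tuple.monotone_sort low).strictMono_of_injective (hlow_inj.comp (Equiv.injective _))
  refine ⟨Tuple.sort low, orient ∘ Tuple.sort low, (isPfPerm_iff _).mpr ⟨fun l => ?_, ?_⟩⟩
  · simpa [blockPerm_pairFst, blockPerm_pairSnd] using hlow_lt (Tuple.sort low l)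
  · simp only [Perm.mul_apply, blockPerm_pairFst, Function.comp_apply]
    exact hsorted

theorem sum_isPfPerm_mul_left {M : Type*} [AddCommMonoid M] (f : Perm (Fin (2 * m)) → M)
    (hf : ∀ σ τ ε, f (σ * blockPerm τ ε) = f σ) (ρ : Perm (Fin (2 * m))) :
    ∑ π ∈ Finset.univ.filter (fun π => IsPfPerm π), f (ρ * π) =
      ∑ π ∈ Finset.univ.filter (fun π => IsPfPerm π), f π := by
  choose τ ε hrep using exists_mul_blockPerm_isPfPerm (m := m)
  set rep : Perm (Fin (2 * m)) → Perm (Fin (2 * m)) := fun σ => σ * blockPerm (τ σ) (ε σ)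
  have hback : ∀ ρ' π, IsPfPerm π → rep (ρ'⁻¹ * rep (ρ' * π)) = π := by
    intro ρ' π hπ
    obtain ⟨τ', ε', h⟩ : ∃ τ' ε', rep (ρ'⁻¹ * rep (ρ' * π)) = π * blockPerm τ' ε' :=
      ⟨_, _, by simp only [rep, mul_assoc, inv_mul_cancel_left, blockPerm_mul]; rfl⟩
    rw [h]
    exact mul_blockPerm_eq_self hπ (h ▸ hrep _)
  refine Finset.sum_nbij' (fun π => rep (ρ * π)) (fun π => rep (ρ⁻¹ * π)) ?_ ?_ ?_ ?_ ?_
  · exact fun π _ => Finset.mem_filter.mpr ⟨Finset.mem_univ _, hrep _⟩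
  · exact fun π _ => Finset.mem_filter.mpr ⟨Finset.mem_univ _, hrep _⟩
  · intro π hπ
    exact hback ρ π (Finset.mem_filter.mp hπ).2
  · intro π hπ
    simpa using hback ρ⁻¹ π (Finset.mem_filter.mp hπ).2
  · intro π _
    exact (hf _ _ _).symm

end PfPerm

theorem Int.cast_units_mul_self {R : Type*} [Ring R] (u : ℤˣ) : ((u : ℤ) : R) * (u : ℤ) = 1 := by
  rw [← Int.cast_mul, Int.units_coe_mul_self, Int.cast_one]

section Pfaffian

variable {F : Type*} [Field F] {m : ℕ}

def pfaffianTerm (A : Matrix (Fin (2 * m)) (Fin (2 * m)) F) (σ : Perm (Fin (2 * m))) : F :=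
  ((sign σ : ℤ) : F) * ∏ l, A (σ (pairFst l)) (σ (pairSnd l))

theorem pfaffian_eq_sum_pfaffianTerm (A : Matrix (Fin (2 * m)) (Fin (2 * m)) F) :
    pfaffian m A = ∑ π ∈ Finset.univ.filter (fun π => IsPfPerm π), pfaffianTerm A π :=
  rfl

theorem apply_perm_fin_two_of_transpose_eq_neg {n : ℕ} {A : Matrix (Fin n) (Fin n) F}
    (hA : Aᵀ = -A) (f : Fin 2 → Fin n) (e : Perm (Fin 2)) :
    A (f (e 0)) (f (e 1)) = ((sign e : ℤ) : F) * A (f 0) (f 1) := by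
  rcases perm_fin_two e with rfl | rfl
  · simp
  · simpa [sign_swap] using congrFun (congrFun hA (f 0)) (f 1)

theorem pfaffianTerm_mul_blockPerm {A : Matrix (Fin (2 * m)) (Fin (2 * m)) F} (hA : Aᵀ = -A)
    (σ : Perm (Fin (2 * m))) (τ : Perm (Fin m)) (ε : Fin m → Perm (Fin 2)) :
    pfaffianTerm A (σ * blockPerm τ ε) = pfaffianTerm A σ := by
  have hblock : ∀ l, A ((σ * blockPerm τ ε) (pairFst l)) ((σ * blockPerm τ ε) (pairSnd l)) =
      ((sign (ε l) : ℤ) : F) * A (σ (pairFst (τ l))) (σ (pairSnd (τ l))) := by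
    intro l
    simpa [blockPerm_pairFst, blockPerm_pairSnd] using
      apply_perm_fin_two_of_transpose_eq_neg hA (fun j => σ (pairEquiv m (τ l, j))) (ε l)
  rw [pfaffianTerm, pfaffianTerm, Finset.prod_congr rfl fun l _ => hblock l,
    Finset.prod_mul_distrib, Equiv.prod_comp τ (fun k => A (σ (pairFst k)) (σ (pairSnd k))),
    Perm.sign_mul, sign_blockPerm, Units.val_mul, Int.cast_mul, mul_assoc, ← mul_assoc _ _ (∏ _, _),
    Units.coe_prod, Int.cast_prod, ← Finset.prod_mul_distrib]
  simp only [Int.cast_units_mul_self, Finset.prod_const_one, one_mul]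

theorem pfaffian_submatrix_perm {A : Matrix (Fin (2 * m)) (Fin (2 * m)) F} (hA : Aᵀ = -A)
    (ρ : Perm (Fin (2 * m))) : pfaffian m (A.submatrix ρ ρ) = sign ρ * pfaffian m A := by
  have hterm : ∀ π, pfaffianTerm (A.submatrix ρ ρ) π = sign ρ * pfaffianTerm A (ρ * π) := by
    intro π
    have hsign : ((sign π : ℤ) : F) = sign ρ * ((sign (ρ * π) : ℤ) : F) := by
      rw [Perm.sign_mul, Units.val_mul, Int.cast_mul, ← mul_assoc, Int.cast_units_mul_self,
        one_mul]
    simp only [pfaffianTerm, hsign, Matrix.submatrix_apply, Perm.mul_apply, mul_assoc]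
  simp only [pfaffian_eq_sum_pfaffianTerm, hterm, ← Finset.mul_sum]
  rw [sum_isPfPerm_mul_left _ (pfaffianTerm_mul_blockPerm hA)]

end Pfaffian

theorem Finset.sum_powerset_neg_one_pow_mul_prod_ite {ι R : Type*} [Fintype ι] [DecidableEq ι]
    [CommRing R] (p : ι → Prop) [DecidablePred p] :
    ∑ K ∈ Finset.univ.powerset, (-1 : R) ^ K.card * ∏ k ∈ K, (if p k then 0 else 1) =
      ∏ k, if p k then 1 else 0 := by
  have hsplit : ∀ k, (if p k then 1 else 0 : R) = -(if p k then 0 else 1) + 1 := by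
    intro k; split_ifs <;> simp
  rw [Finset.prod_congr rfl fun k _ => hsplit k, Finset.prod_add]
  simp [Finset.prod_neg]

section SGN

variable {F : Type*} [Field F] {n m : ℕ}

theorem SGNmat_transpose (c : Fin n → ℕ) : (SGNmat F c)ᵀ = -SGNmat F c := by
  ext i j
  simp [SGNmat, sgn2_comm (c i) (c j)]

theorem pfaffian_SGNmat_comp_perm (c : Fin (2 * m) → ℕ) (ρ : Perm (Fin (2 * m))) :
    pfaffian m (SGNmat F (c ∘ ρ)) = sign ρ * pfaffian m (SGNmat F c) :=
  pfaffian_submatrix_perm (SGNmat_transpose c) ρ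

theorem SGNmat_of_strictMono {c : Fin n → ℕ} (hc : StrictMono c) :
    SGNmat F c = SGNmat F Fin.val := by
  ext i j
  simp [SGNmat, sgn2_comp_strictMono hc Fin.val_strictMono]

theorem pfaffian_SGNmat_of_not_injective [CharZero F] {c : Fin (2 * m) → ℕ}
    (hc : ¬Function.Injective c) : pfaffian m (SGNmat F c) = 0 := by
  obtain ⟨i, j, hij, hne⟩ := Function.not_injective_iff.mp hc
  have hswap : c ∘ swap i j = c := by
    funext x
    simp only [Function.comp_apply, swap_apply_def]
    split_ifs <;> simp_all
  apply self_eq_neg.mp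
  simpa [hswap, sign_swap hne] using pfaffian_SGNmat_comp_perm (F := F) c (swap i j)

end SGN

section Normalization

variable {m : ℕ}

def mergePairs (K : Finset (Fin m)) (i : Fin (2 * m)) : ℕ :=
  if ((pairEquiv m).symm i).1 ∈ K then 2 * ((pairEquiv m).symm i).1 else i

theorem mergePairs_pairEquiv (K : Finset (Fin m)) (k : Fin m) (j : Fin 2) :
    mergePairs K (pairEquiv m (k, j)) = 2 * k + if k ∈ K then 0 else (j : ℕ) := by
  unfold mergePairs
  split_ifs <;> simp_all

@[simp] theorem mergePairs_empty : mergePairs (∅ : Finset (Fin m)) = Fin.val := by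
  funext i
  simp [mergePairs]

theorem not_injective_mergePairs {K : Finset (Fin m)} (hK : K.Nonempty) :
    ¬Function.Injective (mergePairs K) := by
  obtain ⟨k, hk⟩ := hK
  intro hinj
  have h := hinj (a₁ := pairEquiv m (k, 0)) (a₂ := pairEquiv m (k, 1))
    (by rw [mergePairs_pairEquiv, mergePairs_pairEquiv]; simp [hk])
  exact (pairFst_lt_pairSnd k).ne (by simpa using h)

theorem sgn2_mergePairs (K : Finset (Fin m)) {a b : Fin (2 * m)} (hab : a < b) :
    sgn2 (mergePairs K a) (mergePairs K b) =
      if ∃ k ∈ K, a = pairFst k ∧ b = pairSnd k then 0 else 1 := by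
  obtain ⟨⟨k, j⟩, rfl⟩ := (pairEquiv m).surjective a
  obtain ⟨⟨k', j'⟩, rfl⟩ := (pairEquiv m).surjective b
  simp only [Fin.lt_def, pairEquiv_val] at hab
  simp only [mergePairs_pairEquiv, ← pairEquiv_zero, ← pairEquiv_one,
    (pairEquiv m).apply_eq_iff_eq, Prod.mk.injEq]
  rcases eq_or_ne k k' with rfl | hne
  · obtain ⟨rfl, rfl⟩ : j = 0 ∧ j' = 1 := by omega
    by_cases hk : k ∈ K <;> simp [hk, sgn2_of_lt]
  · have hlt : (k : ℕ) < k' := by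
      have := Fin.val_ne_iff.mpr hne
      omega
    rw [sgn2_of_lt (by split_ifs <;> omega), if_neg]
    rintro ⟨_, -, ⟨rfl, -⟩, rfl, -⟩
    exact hne rfl

def HasBlock (π : Perm (Fin (2 * m))) (k : Fin m) : Prop :=
  ∃ l, π (pairFst l) = pairFst k ∧ π (pairSnd l) = pairSnd k

instance (π : Perm (Fin (2 * m))) : DecidablePred (HasBlock π) := fun k => by
  unfold HasBlock; infer_instance

theorem eq_one_of_forall_hasBlock {π : Perm (Fin (2 * m))} (hπ : IsPfPerm π)
    (h : ∀ k, HasBlock π k) : π = 1 := by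
  obtain ⟨-, hmono⟩ := (isPfPerm_iff π).mp hπ
  choose g hgFst hgSnd using h
  have hg : StrictMono g := fun a b hab =>
    hmono.lt_iff_lt.mp (by simpa only [hgFst] using pairFst_strictMono hab)
  have hg_id : ∀ k, g k = k := congrFun hg.eq_id
  ext x
  obtain ⟨⟨k, j⟩, rfl⟩ := (pairEquiv m).surjective x
  fin_cases j
  · simpa [hg_id] using congrArg Fin.val (hgFst k)
  · simpa [hg_id] using congrArg Fin.val (hgSnd k)

theorem pfaffianTerm_SGNmat_mergePairs {F : Type*} [Field F] {π : Perm (Fin (2 * m))}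
    (hπ : IsPfPerm π) (K : Finset (Fin m)) :
    pfaffianTerm (SGNmat F (mergePairs K)) π =
      sign π * ∏ k ∈ K, if HasBlock π k then 0 else 1 := by
  have hpair := ((isPfPerm_iff π).mp hπ).1
  simp only [pfaffianTerm, SGNmat, Matrix.of_apply, sgn2_mergePairs K (hpair _)]
  congr 1
  have hind : ∀ l, ((if ∃ k ∈ K, π (pairFst l) = pairFst k ∧ π (pairSnd l) = pairSnd k
      then 0 else 1 : ℤ) : F) =
      if ¬∃ k ∈ K, π (pairFst l) = pairFst k ∧ π (pairSnd l) = pairSnd k then 1 else 0 := by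
    intro l; split_ifs <;> simp_all
  simp only [← ite_not (HasBlock π _)]
  rw [Finset.prod_congr rfl fun l _ => hind l, Finset.prod_boole, Finset.prod_boole]
  simp only [HasBlock, Finset.mem_univ, true_implies, not_exists, not_and]
  exact if_congr ⟨fun h k hk l => h l k hk, fun h l k hk => h k hk l⟩ rfl rfl

theorem pfaffian_SGNmat_val {F : Type*} [Field F] [CharZero F] :
    pfaffian m (SGNmat F Fin.val) = 1 := by
  have hvanish : ∀ K ∈ (Finset.univ : Finset (Fin m)).powerset, K ≠ ∅ →
      (-1 : F) ^ K.card * pfaffian m (SGNmat F (mergePairs K)) = 0 := fun K _ hK => by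
    rw [pfaffian_SGNmat_of_not_injective
      (not_injective_mergePairs (Finset.nonempty_iff_ne_empty.mpr hK)), mul_zero]
  calc pfaffian m (SGNmat F Fin.val)
      = ∑ K ∈ Finset.univ.powerset, (-1 : F) ^ K.card * pfaffian m (SGNmat F (mergePairs K)) := by
        rw [Finset.sum_eq_single_of_mem ∅ (Finset.empty_mem_powerset _) hvanish]
        simp
    _ = ∑ π ∈ Finset.univ.filter (fun π => IsPfPerm π), ((sign π : ℤ) : F) *
          ∑ K ∈ Finset.univ.powerset, (-1 : F) ^ K.card *
            ∏ k ∈ K, (if HasBlock π k then 0 else 1) := by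
        simp only [pfaffian_eq_sum_pfaffianTerm, Finset.mul_sum]
        rw [Finset.sum_comm]
        refine Finset.sum_congr rfl fun π hπ => Finset.sum_congr rfl fun K _ => ?_
        rw [pfaffianTerm_SGNmat_mergePairs (Finset.mem_filter.mp hπ).2]
        ring
    _ = ∑ π ∈ Finset.univ.filter (fun π => IsPfPerm π), ((sign π : ℤ) : F) *
          if π = 1 then 1 else 0 := by
        refine Finset.sum_congr rfl fun π hπ => ?_
        rw [Finset.sum_powerset_neg_one_pow_mul_prod_ite]
        congr 1
        split_ifs with h
        · subst h
          exact Finset.prod_eq_one fun k _ => if_pos ⟨k, rfl, rfl⟩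
        · obtain ⟨k, hk⟩ : ∃ k, ¬HasBlock π k := by
            by_contra! hall
            exact h (eq_one_of_forall_hasBlock (Finset.mem_filter.mp hπ).2 hall)
          exact Finset.prod_eq_zero (Finset.mem_univ k) (if_neg hk)
    _ = 1 := by simp [isPfPerm_one]

end Normalization

theorem pfaffian_SGNmat {F : Type*} [Field F] [CharZero F] {m : ℕ} (c : Fin (2 * m) → ℕ) :
    pfaffian m (SGNmat F c) = sgnTuple c := by
  by_cases hc : Function.Injective c
  · obtain ⟨ρ, d, hd, rfl⟩ : ∃ (ρ : Perm (Fin (2 * m))) (d : Fin (2 * m) → ℕ),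
        StrictMono d ∧ c = d ∘ ρ :=
      ⟨(Tuple.sort c)⁻¹, c ∘ Tuple.sort c,
        (Tuple.monotone_sort c).strictMono_of_injective (hc.comp (Equiv.injective _)),
        by ext; simp⟩
    rw [pfaffian_SGNmat_comp_perm, sgnTuple_comp_perm, SGNmat_of_strictMono hd,
      pfaffian_SGNmat_val, sgnTuple_of_strictMono hd]
    simp
  · rw [pfaffian_SGNmat_of_not_injective hc, sgnTuple, if_neg hc, Int.cast_zero]

/-- for a tuple `(c₁,…,c_{2m})` of naturals,
`sgn(c₁,…,c_{2m}) = ∑_{π ∈ Π_{2m}} sgn(π(1),…,π(2m)) ∏_{l=1}^m sgn(c_{π(2l-1)}, c_{π(2l)})`. -/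
theorem sgnTuple_eq_sum_pfPerm (m : ℕ) (c : Fin (2 * m) → ℕ) :
    sgnTuple c =
      ∑ π ∈ Finset.univ.filter (fun π : Equiv.Perm (Fin (2 * m)) => IsPfPerm π),
        sgnTuple (fun i => ((π i : ℕ))) *
          ∏ l : Fin m,
            sgn2 (c (π ⟨2 * l.val, by omega⟩)) (c (π ⟨2 * l.val + 1, by omega⟩)) := by
  have h := pfaffian_SGNmat (F := ℚ) c
  simp only [pfaffian, SGNmat, Matrix.of_apply] at h
  simp only [sgnTuple_perm]
  exact_mod_cast h.symm
end

section
/- Let F be a field, n ≥ k ≥ 1 integers, and X = (x_{i,j}) an n × k matrix over F. Then det_{n,k}(X) = Σ_{σ} sgn_{n,k}(σ) · x_{σ(1),1} · x_{σ(2),2} · ⋯ · x_{σ(k),k}, where the sum runs over all injections σ from {1,…,k} to {1,…,n}. -/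
open Matrix Finset

/-!
Every injection `σ : Fin k → Fin n` factors uniquely as `c ∘ τ` with `c` strictly increasing
(the enumeration of its image) and `τ` a permutation. Expanding each minor `det X[c | ·]` by the
Leibniz formula therefore produces exactly one term per injection, with sign
`(-1)^{Σ c_i - Σ i} · sign τ`; and `sign τ = sgn(c ∘ τ)` because composing with an increasing
map does not change the inversions, while `Σ c_i = Σ c_{τ α}`.
-/

theorem Equiv.Perm.sign_eq_neg_one_pow_card_inversions {k : ℕ} (τ : Equiv.Perm (Fin k)) :
    (Equiv.Perm.sign τ : ℤ) = (-1) ^ #{p : Fin k × Fin k | p.1 < p.2 ∧ τ p.2 < τ p.1} := by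
  rw [τ.sign_eq_prod_prod_Ioi, ← prod_const, prod_filter, Fintype.prod_prod_type]
  push_cast
  refine prod_congr rfl fun i _ => ?_
  rw [← Finset.filter_lt_eq_Ioi (a := i), prod_filter]
  refine prod_congr rfl fun j _ => ?_
  by_cases hij : i < j
  · rcases (τ.injective.ne hij.ne).lt_or_gt with h | h <;> simp [hij, h, h.not_gt]
  · simp [hij]

theorem sgnTuple_comp_perm_of_strictMono {k : ℕ} {f : Fin k → ℕ} (hf : StrictMono f)
    (τ : Equiv.Perm (Fin k)) : sgnTuple (f ∘ τ) = Equiv.Perm.sign τ := by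
  rw [sgnTuple, if_pos (hf.injective.comp τ.injective), τ.sign_eq_neg_one_pow_card_inversions]
  simp only [Function.comp_apply, hf.lt_iff_lt]

theorem Finset.sum_injective_eq_sum_strictMono_sum_perm {α M : Type*} [LinearOrder α]
    [Fintype α] [AddCommMonoid M] {k : ℕ} (f : (Fin k → α) → M) :
    ∑ σ ∈ univ.filter (fun σ : Fin k → α => Function.Injective σ), f σ =
      ∑ c ∈ univ.filter (fun c : Fin k → α => ∀ i j, i < j → c i < c j),
        ∑ τ : Equiv.Perm (Fin k), f (c ∘ τ) := by
  rw [← sum_product']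
  symm
  refine sum_bij (fun p _ => p.1 ∘ p.2) ?_ ?_ ?_ (fun _ _ => rfl)
  · rintro ⟨c, τ⟩ hp
    simp only [mem_product, mem_filter, mem_univ, true_and, and_true] at hp ⊢
    exact (StrictMono.injective hp).comp τ.injective
  · rintro ⟨c, τ⟩ hp ⟨c', τ'⟩ hp' h
    simp only [mem_product, mem_filter, mem_univ, true_and, and_true] at hp hp'
    have hc : StrictMono c := hp
    obtain rfl : c = c' := by
      rw [← hc.range_inj hp', ← EquivLike.range_comp c τ, ← EquivLike.range_comp c' τ']
      exact congrArg Set.range h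
    obtain rfl : τ = τ' := Equiv.ext fun x => hc.injective (congrFun h x)
    rfl
  · intro σ hσ
    simp only [mem_filter, mem_univ, true_and] at hσ
    refine ⟨(σ ∘ Tuple.sort σ, (Tuple.sort σ)⁻¹), ?_, ?_⟩
    · simp only [mem_product, mem_filter, mem_univ, true_and, and_true]
      exact (Tuple.monotone_sort σ).strictMono_of_injective (hσ.comp (Tuple.sort σ).injective)
    · ext i; simp

theorem neg_one_zpow_natCast_sub {R : Type*} [DivisionRing R] (a b : ℕ) :
    (-1 : R) ^ ((a : ℤ) - b) = (-1) ^ a * (-1) ^ b := by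
  rw [zpow_sub₀ (neg_ne_zero.2 one_ne_zero), zpow_natCast, zpow_natCast, div_eq_mul_inv,
    ← inv_pow, inv_neg_one]

theorem cullisDet_eq_sum_injections_general {F : Type*} [Field F] (n k : ℕ)
    (X : Matrix (Fin n) (Fin k) F) :
    cullisDet n k X =
      ∑ σ ∈ Finset.univ.filter (fun σ : Fin k → Fin n => Function.Injective σ),
        ((-1 : F) ^ (∑ α : Fin k, ((((σ α : ℕ) + 1 : ℤ)) - (((α : ℕ) + 1 : ℤ))) : ℤ)) *
          ((sgnTuple (fun α => (σ α : ℕ)) : ℤ) : F) *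
          ∏ α : Fin k, X (σ α) α := by
  rw [cullisDet, mul_sum, sum_injective_eq_sum_strictMono_sum_perm]
  refine sum_congr rfl fun c hcmem => ?_
  have hc : StrictMono fun i => (c i : ℕ) := fun i j h => (mem_filter.1 hcmem).2 i j h
  rw [det_apply', mul_sum, mul_sum]
  refine sum_congr rfl fun τ _ => ?_
  have hexp : ∑ α : Fin k, (((c (τ α) : ℕ) + 1 : ℤ) - ((α : ℕ) + 1 : ℤ)) =
      ((∑ i : Fin k, ((c i : ℕ) + 1) : ℕ) : ℤ) - ((∑ j ∈ range k, (j + 1) : ℕ) : ℤ) := by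
    push_cast
    rw [sum_sub_distrib, Equiv.sum_comp τ (fun i => ((c i : ℕ) : ℤ) + 1),
      Fin.sum_univ_eq_sum_range (fun j => (j : ℤ) + 1)]
  have hsgn := sgnTuple_comp_perm_of_strictMono hc τ
  simp only [Function.comp_def] at hsgn
  simp only [Function.comp_apply, hexp, neg_one_zpow_natCast_sub, hsgn, submatrix_apply, id]
  ring

/-- for `n ≥ k ≥ 1` and an `n × k` matrix `X` over a field `F`,
`det_{n,k}(X) = ∑_σ sgn_{n,k}(σ) x_{σ(1),1} ⋯ x_{σ(k),k}`, the sum over all injections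
`σ : {1,…,k} → {1,…,n}`, where
`sgn_{n,k}(σ) = (-1)^{∑_α (σ(α) - α)} ⬝ sgn(σ(1),…,σ(k))`. -/
theorem cullisDet_eq_sum_injections {F : Type*} [Field F] (n k : ℕ) (hk : 1 ≤ k)
    (hn : k ≤ n) (X : Matrix (Fin n) (Fin k) F) :
    cullisDet n k X =
      ∑ σ ∈ Finset.univ.filter (fun σ : Fin k → Fin n => Function.Injective σ),
        ((-1 : F) ^ (∑ α : Fin k, ((((σ α : ℕ) + 1 : ℤ)) - (((α : ℕ) + 1 : ℤ))) : ℤ)) *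
          ((sgnTuple (fun α => (σ α : ℕ)) : ℤ) : F) *
          ∏ α : Fin k, X (σ α) α :=
  cullisDet_eq_sum_injections_general n k X
end

section
/- Let F be a field and n > k ≥ 1 integers. Let X be an n × k matrix over F and let X' be the n × (k+1) matrix obtained from X by appending a column of all 1's as the last column. Then det_{n,k+1}(X') = det_{n,k}(X) if n + k is odd, and det_{n,k+1}(X') = 0 if n + k is even. -/
open Matrix Finset

/-!
Expand each `(k+1)`-minor of `X'` along its column of ones. The term of row `i` of the minor on
rows `c` is a `k`-minor of `X` on the rows `d = c ∖ {cᵢ}`, and `(c, i) ↦ (d, cᵢ)` is a bijection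
onto the pairs (increasing `k`-tuple `d`, row `e ∉ d`): its inverse inserts `e` into `d` at the
position `#{j | dⱼ < e}`. So every `k`-minor of `X` is counted once for each of the `n - k` rows
`e` outside it. Up to the global sign `(-1)^(k+1)`, the sign of `e` is `(-1)^(e + #{j | dⱼ < e})`,
which is `(-1)` to the rank of `e` among the rows outside `d`; these alternate, so they sum to `1`
or `0` according to the parity of `n - k`. The global sign cancels against the extra factor
`(-1)^(k+1)` in the normalisation of `cullisDet n (k+1)`.
-/

section IncreasingTuples

variable {α : Type*} [LinearOrder α]

theorem lt_card_filter_lt_iff {k : ℕ} {d : Fin k → α} (hd : StrictMono d) (e : α) (i : Fin k) :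
    (i : ℕ) < #{j | d j < e} ↔ d i < e := by
  constructor
  · intro hi
    by_contra! hei
    have hsub : univ.filter (fun j => d j < e) ⊆ Iio i := fun j hj => by
      simp only [mem_filter, mem_univ, true_and] at hj
      exact mem_Iio.mpr (hd.lt_iff_lt.mp (hj.trans_le hei))
    exact (card_le_card hsub).not_gt (by rwa [Fin.card_Iio])
  · intro hie
    have hsub : Iic i ⊆ univ.filter (fun j => d j < e) := fun j hj =>
      mem_filter.mpr ⟨mem_univ _, (hd.monotone (mem_Iic.mp hj)).trans_lt hie⟩
    have hcard := card_le_card hsub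
    rw [Fin.card_Iic] at hcard
    omega

def insertPos {k : ℕ} (d : Fin k → α) (e : α) : Fin (k + 1) :=
  ⟨#{j | d j < e}, Nat.lt_succ_of_le ((card_le_univ _).trans_eq (Fintype.card_fin k))⟩

theorem strictMono_insertNth_insertPos {k : ℕ} {d : Fin k → α} (hd : StrictMono d) {e : α}
    (he : e ∉ Set.range d) : StrictMono ((insertPos d e).insertNth e d) := by
  refine (Fin.strictMono_insertNth_iff _ _ _).mpr ⟨hd, fun i hi => ?_, fun i hi => ?_⟩
  · exact (lt_card_filter_lt_iff hd e i).mp hi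
  · have hei : ¬ d i < e := fun h => ((lt_card_filter_lt_iff hd e i).mpr h).not_ge hi
    exact (not_lt.mp hei).lt_of_ne' fun h => he ⟨i, h⟩

theorem insertPos_removeNth {k : ℕ} {c : Fin (k + 1) → α} (hc : StrictMono c)
    (i : Fin (k + 1)) : insertPos (i.removeNth c) (c i) = i := by
  have hfilter : univ.filter (fun j : Fin k => i.removeNth c j < c i)
      = univ.filter (fun j : Fin k => (j : ℕ) < i) :=
    filter_congr fun j _ => by
      rw [Fin.removeNth_apply, hc.lt_iff_lt, Fin.succAbove_lt_iff_castSucc_lt, Fin.lt_def,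
        Fin.val_castSucc]
  exact Fin.ext (by simp [insertPos, hfilter, Fin.card_filter_val_lt, i.is_le])

variable [Fintype α]

def increasingTuples (k : ℕ) (α : Type*) [Fintype α] [LinearOrder α] : Finset (Fin k → α) :=
  univ.filter fun c => ∀ i j : Fin k, i < j → c i < c j

theorem mem_increasingTuples {k : ℕ} {c : Fin k → α} :
    c ∈ increasingTuples k α ↔ StrictMono c := by
  simp [increasingTuples, StrictMono]

theorem sum_increasingTuples_succ {M : Type*} [AddCommMonoid M] {k : ℕ}
    (f : (Fin k → α) → α → M) :
    ∑ c ∈ increasingTuples (k + 1) α, ∑ i, f (i.removeNth c) (c i)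
      = ∑ d ∈ increasingTuples k α, ∑ e ∈ (univ.image d)ᶜ, f d e := by
  rw [sum_sigma', sum_sigma']
  refine sum_nbij' (fun p => ⟨p.2.removeNth p.1, p.1 p.2⟩)
    (fun q => ⟨(insertPos q.1 q.2).insertNth q.2 q.1, insertPos q.1 q.2⟩) ?_ ?_ ?_ ?_ ?_
  · rintro ⟨c, i⟩ hc
    simp only [mem_sigma, mem_increasingTuples, mem_compl, mem_image, mem_univ, true_and,
      not_exists] at hc ⊢
    exact ⟨hc.1.removeNth i, fun j h => Fin.succAbove_ne i j (hc.1.injective h)⟩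
  · rintro ⟨d, e⟩ hd
    simp only [mem_sigma, mem_increasingTuples, mem_compl, mem_image, mem_univ, true_and,
      not_exists] at hd ⊢
    exact ⟨strictMono_insertNth_insertPos hd.1 fun ⟨j, h⟩ => hd.2 j h, trivial⟩
  · rintro ⟨c, i⟩ hc
    simp only [mem_sigma, mem_increasingTuples] at hc
    simp [insertPos_removeNth hc.1]
  · rintro ⟨d, e⟩ -
    simp
  · rintro ⟨c, i⟩ -
    rfl

end IncreasingTuples

theorem sum_card_filter_lt_eq_sum_range {β M : Type*} [LinearOrder β] [AddCommMonoid M]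
    (f : ℕ → M) (s : Finset β) : ∑ e ∈ s, f #{x ∈ s | x < e} = ∑ j ∈ range #s, f j := by
  induction s using Finset.induction_on_max with
  | empty => simp
  | insert a s ha ih =>
    have ha' : a ∉ s := fun h => (ha a h).false
    rw [sum_insert ha', card_insert_of_notMem ha', sum_range_succ, add_comm,
      filter_insert, if_neg (lt_irrefl a), filter_true_of_mem ha]
    congr 1
    refine (sum_congr rfl fun e he => ?_).trans ih
    rw [filter_insert, if_neg (ha e he).not_gt]

theorem sum_neg_one_pow_card_filter_lt {β R : Type*} [LinearOrder β] [Ring R]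
    (s : Finset β) : ∑ e ∈ s, (-1 : R) ^ #{x ∈ s | x < e} = if Even #s then 0 else 1 := by
  rw [sum_card_filter_lt_eq_sum_range (fun j => (-1 : R) ^ j), ← Fin.sum_univ_eq_sum_range,
    Fin.sum_neg_one_pow]

theorem card_filter_lt_add_card_filter_compl_lt {n : ℕ} (t : Finset (Fin n)) (e : Fin n) :
    #{x ∈ t | x < e} + #{x ∈ tᶜ | x < e} = e := by
  rw [← card_union_of_disjoint
      (disjoint_compl_right.mono (filter_subset _ _) (filter_subset _ _)),
    ← filter_union, union_compl, ← Fin.card_Iio, filter_gt_eq_Iio]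

theorem sum_compl_neg_one_pow_add_card_filter_lt {R : Type*} [Ring R] {n : ℕ}
    (t : Finset (Fin n)) :
    ∑ e ∈ tᶜ, (-1 : R) ^ ((e : ℕ) + #{x ∈ t | x < e}) = if Odd (n + #t) then 1 else 0 := by
  have hsign : ∀ e : Fin n,
      (-1 : R) ^ ((e : ℕ) + #{x ∈ t | x < e}) = (-1) ^ #{x ∈ tᶜ | x < e} := by
    intro e
    rw [← card_filter_lt_add_card_filter_compl_lt t e, add_right_comm, ← two_mul, pow_add,
      pow_mul, neg_one_sq, one_pow, one_mul]
  have hparity : Even #tᶜ ↔ ¬ Odd (n + #t) := by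
    rw [card_compl, Fintype.card_fin, Nat.not_odd_iff_even, Nat.even_add,
      Nat.even_sub ((card_le_univ t).trans_eq (Fintype.card_fin n))]
  simp_rw [hsign, sum_neg_one_pow_card_filter_lt, hparity, ite_not]

theorem sum_compl_image_neg_one_pow {R : Type*} [Ring R] {n k : ℕ} {d : Fin k → Fin n}
    (hd : Function.Injective d) :
    ∑ e ∈ (univ.image d)ᶜ, (-1 : R) ^ ((e : ℕ) + #{j | d j < e})
      = if Odd (n + k) then 1 else 0 := by
  have hcard : ∀ e, #{j | d j < e} = #{x ∈ univ.image d | x < e} := fun e => by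
    rw [filter_image, card_image_of_injective _ hd]
  simp_rw [hcard, sum_compl_neg_one_pow_add_card_filter_lt, card_image_of_injective _ hd,
    card_univ, Fintype.card_fin]

def alternatingMinorSum {F : Type*} [Field F] {n k : ℕ} (X : Matrix (Fin n) (Fin k) F) : F :=
  ∑ c ∈ increasingTuples k (Fin n), (-1) ^ (∑ i, ((c i : ℕ) + 1)) * (X.submatrix c id).det

theorem cullisDet_eq_alternatingMinorSum {F : Type*} [Field F] {n k : ℕ}
    (X : Matrix (Fin n) (Fin k) F) :
    cullisDet n k X = (-1) ^ (∑ j ∈ range k, (j + 1)) * alternatingMinorSum X :=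
  rfl

theorem det_submatrix_appendOnes {F : Type*} [Field F] {n k : ℕ}
    (X : Matrix (Fin n) (Fin k) F) (c : Fin (k + 1) → Fin n) :
    ((appendOnes (K := k + 1) X).submatrix c id).det
      = ∑ i : Fin (k + 1), (-1) ^ ((i : ℕ) + k) * (X.submatrix (i.removeNth c) id).det := by
  rw [det_succ_column _ (Fin.last k)]
  refine sum_congr rfl fun i _ => ?_
  have hminor : ((appendOnes (K := k + 1) X).submatrix c id).submatrix
      i.succAbove (Fin.last k).succAbove = X.submatrix (i.removeNth c) id := by
    ext a b
    simp [appendOnes, Fin.removeNth]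
  rw [hminor]
  simp [appendOnes]

theorem alternatingMinorSum_appendOnes {F : Type*} [Field F] {n k : ℕ}
    (X : Matrix (Fin n) (Fin k) F) :
    alternatingMinorSum (appendOnes (K := k + 1) X)
      = (-1) ^ (k + 1) * (if Odd (n + k) then 1 else 0) * alternatingMinorSum X := by
  set term : (Fin k → Fin n) → Fin n → F := fun d e =>
    (-1) ^ (∑ j, ((d j : ℕ) + 1)) * (X.submatrix d id).det *
      ((-1) ^ (k + 1) * (-1) ^ ((e : ℕ) + #{j | d j < e}))
  have hexpand : ∀ c ∈ increasingTuples (k + 1) (Fin n),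
      (-1) ^ (∑ i, ((c i : ℕ) + 1)) * ((appendOnes (K := k + 1) X).submatrix c id).det
        = ∑ i, term (i.removeNth c) (c i) := by
    intro c hc
    rw [det_submatrix_appendOnes, mul_sum]
    refine sum_congr rfl fun i _ => ?_
    have hpos : #{j | i.removeNth c j < c i} = (i : ℕ) :=
      congrArg Fin.val (insertPos_removeNth (mem_increasingTuples.mp hc) i)
    rw [Fin.sum_univ_succAbove _ i]
    simp only [term, hpos]
    simp only [Fin.removeNth_apply]
    ring
  rw [alternatingMinorSum, sum_congr rfl hexpand, sum_increasingTuples_succ term,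
    alternatingMinorSum, mul_sum]
  refine sum_congr rfl fun d hd => ?_
  rw [← sum_compl_image_neg_one_pow (mem_increasingTuples.mp hd).injective, mul_sum, sum_mul]
  refine sum_congr rfl fun e _ => ?_
  ring

theorem cullisDet_appendOnes_general {F : Type*} [Field F] (n k : ℕ)
    (X : Matrix (Fin n) (Fin k) F) :
    cullisDet n (k + 1) (appendOnes (K := k + 1) X) =
      if Odd (n + k) then cullisDet n k X else 0 := by
  have hsq : (-1 : F) ^ (k + 1) * (-1) ^ (k + 1) = 1 := by rw [← mul_pow]; simp
  rw [cullisDet_eq_alternatingMinorSum, cullisDet_eq_alternatingMinorSum,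
    alternatingMinorSum_appendOnes, sum_range_succ, pow_add]
  split_ifs
  · linear_combination (-1 : F) ^ (∑ j ∈ range k, (j + 1)) * alternatingMinorSum X * hsq
  · simp

/-- for `n > k ≥ 1` and an `n × k` matrix `X` over a field `F`, with `X'`
the matrix `X` with a column of `1`'s appended,
`det_{n,k+1}(X') = det_{n,k}(X)` if `n + k` is odd, and `det_{n,k+1}(X') = 0` otherwise. -/
theorem cullisDet_appendOnes {F : Type*} [Field F] (n k : ℕ) (hk : 1 ≤ k) (hn : k < n)
    (X : Matrix (Fin n) (Fin k) F) :
    cullisDet n (k + 1) (appendOnes (K := k + 1) X) =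
      if Odd (n + k) then cullisDet n k X else 0 :=
  cullisDet_appendOnes_general n k X
end

section
/- Let F be a field and n ≥ k ≥ 1 integers. Let X be an n × k matrix over F and let Y be the (n+1) × k matrix obtained from X by appending a row of all 0's as the last row. Then det_{n+1,k}(Y) = det_{n,k}(X). -/
open Matrix Finset

lemma Fin.exists_castSucc_comp_eq {n k : ℕ} {c : Fin k → Fin (n + 1)}
    (hc : ∀ i, c i ≠ Fin.last n) : ∃ d : Fin k → Fin n, Fin.castSucc ∘ d = c :=
  ⟨fun i => (c i).castPred (hc i), funext fun i => Fin.castSucc_castPred (c i) (hc i)⟩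

/-- Minors through the zero last row vanish; the others are the minors of the remaining rows,
with the same row indices. -/
theorem cullisDet_eq_of_last_row_eq_zero {F : Type*} [Field F] {n k : ℕ}
    (Y : Matrix (Fin (n + 1)) (Fin k) F) (hY : Y (Fin.last n) = 0) :
    cullisDet (n + 1) k Y = cullisDet n k (Y.submatrix Fin.castSucc id) := by
  unfold cullisDet
  congr 1
  set term : (Fin k → Fin (n + 1)) → F :=
    fun c => (-1 : F) ^ (∑ i : Fin k, ((c i : ℕ) + 1)) * (Y.submatrix c id).det
  have hinj : Function.Injective (Fin.castSucc ∘ · : (Fin k → Fin n) → Fin k → Fin (n + 1)) :=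
    (Fin.castSucc_injective n).comp_left
  symm
  calc _ = ∑ d ∈ univ.filter (fun d : Fin k → Fin n => ∀ i j : Fin k, i < j → d i < d j),
        term (Fin.castSucc ∘ d) := by
        simp only [term, Function.comp_apply, Fin.val_castSucc, submatrix_submatrix,
          Function.id_comp]
    _ = ∑ c ∈ (univ.filter (fun d : Fin k → Fin n => ∀ i j : Fin k, i < j → d i < d j)).image
          (Fin.castSucc ∘ ·), term c := (sum_image hinj.injOn).symm
    _ = _ := by
      refine sum_subset (fun c hc => ?_) (fun c hc hc' => ?_)
      · obtain ⟨d, hd, rfl⟩ := mem_image.mp hc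
        simp only [mem_filter, mem_univ, true_and] at hd ⊢
        exact fun i j hij => Fin.castSucc_lt_castSucc_iff.mpr (hd i j hij)
      · obtain ⟨i, hi⟩ : ∃ i, c i = Fin.last n := by
          by_contra! hlast
          obtain ⟨d, rfl⟩ := Fin.exists_castSucc_comp_eq hlast
          refine hc' (mem_image.mpr ⟨d, ?_, rfl⟩)
          simp only [mem_filter, mem_univ, true_and] at hc ⊢
          exact fun i j hij => Fin.castSucc_lt_castSucc_iff.mp (hc i j hij)
        refine mul_eq_zero_of_right _ (det_eq_zero_of_row_eq_zero i fun j => ?_)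
        simp [hi, hY]

theorem cullisDet_append_zero_row_general {F : Type*} [Field F] (n k : ℕ)
    (X : Matrix (Fin n) (Fin k) F) :
    cullisDet (n + 1) k
      (Matrix.of fun i j => if h : (i : ℕ) < n then X ⟨(i : ℕ), h⟩ j else 0) =
      cullisDet n k X := by
  rw [cullisDet_eq_of_last_row_eq_zero _ (funext fun j => by simp)]
  congr 1
  ext i j
  simp

/-- for `n ≥ k ≥ 1` and an `n × k` matrix `X` over a field `F`, appending a
row of `0`'s does not change the Cullis determinant: `det_{n+1,k}(Y) = det_{n,k}(X)`. -/
theorem cullisDet_append_zero_row {F : Type*} [Field F] (n k : ℕ) (hk : 1 ≤ k)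
    (hn : k ≤ n) (X : Matrix (Fin n) (Fin k) F) :
    cullisDet (n + 1) k
      (Matrix.of fun i j => if h : (i : ℕ) < n then X ⟨(i : ℕ), h⟩ j else 0) =
      cullisDet n k X :=
  cullisDet_append_zero_row_general n k X
end

section
/- Let F be a field and n ≥ k ≥ 1 integers. If an n × k matrix X over F has two identical columns, or one of its columns is a linear combination of the other columns, then det_{n,k}(X) = 0. -/
/-! Two equal columns are a special case of one column being a combination of the others.
If `X_j = ∑_{j' ≠ j} coef j' • X_{j'}`, then `coef` with its `j`-th entry replaced by `-1` is a
nonzero vector in the kernel of `X`, hence of every `k × k` row-submatrix of `X`, so every minor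
in the alternating sum defining the Cullis determinant vanishes. -/

open Matrix Finset

theorem det_submatrix_eq_zero_of_mulVec_eq_zero {m n R : Type*} [Fintype n] [DecidableEq n]
    [CommRing R] [IsDomain R] {X : Matrix m n R} {v : n → R} (hv : v ≠ 0) (hX : X *ᵥ v = 0)
    (c : n → m) : (X.submatrix c id).det = 0 :=
  exists_mulVec_eq_zero_iff.mp
    ⟨v, hv, by rw [← Equiv.coe_refl, submatrix_mulVec_equiv, Equiv.refl_symm, Equiv.coe_refl,
      Function.comp_id, hX, Pi.zero_comp]⟩

theorem cullisDet_eq_zero_of_mulVec_eq_zero {F : Type*} [Field F] {n k : ℕ}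
    {X : Matrix (Fin n) (Fin k) F} {v : Fin k → F} (hv : v ≠ 0) (hX : X *ᵥ v = 0) :
    cullisDet n k X = 0 := by
  unfold cullisDet
  simp only [det_submatrix_eq_zero_of_mulVec_eq_zero hv hX, mul_zero, sum_const_zero]

theorem mulVec_update_neg_one_eq_zero {m n R : Type*} [Fintype n] [DecidableEq n] [CommRing R]
    {X : Matrix m n R} {j : n} {coef : n → R}
    (h : ∀ i, X i j = ∑ j' ∈ univ.erase j, coef j' * X i j') :
    X *ᵥ Function.update coef j (-1) = 0 := by
  ext i
  rw [mulVec, dotProduct, ← add_sum_erase _ _ (mem_univ j), Function.update_self,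
    sum_congr rfl fun j' hj' => by rw [Function.update_of_ne (ne_of_mem_erase hj'), mul_comm],
    ← h i]
  simp

theorem cullisDet_eq_zero_general {F : Type*} [Field F] (n k : ℕ)
    (X : Matrix (Fin n) (Fin k) F)
    (h : (∃ j₁ j₂ : Fin k, j₁ ≠ j₂ ∧ ∀ i, X i j₁ = X i j₂) ∨
      (∃ j : Fin k, ∃ coef : Fin k → F,
        ∀ i, X i j = ∑ j' ∈ Finset.univ.erase j, coef j' * X i j')) :
    cullisDet n k X = 0 := by
  obtain ⟨j, coef, hj⟩ : ∃ j : Fin k, ∃ coef : Fin k → F,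
      ∀ i, X i j = ∑ j' ∈ univ.erase j, coef j' * X i j' := by
    rcases h with ⟨j₁, j₂, hne, heq⟩ | hcomb
    · refine ⟨j₁, Pi.single j₂ 1, fun i => ?_⟩
      rw [sum_eq_single_of_mem j₂ (mem_erase.mpr ⟨hne.symm, mem_univ _⟩)
        fun j' _ hj' => by rw [Pi.single_eq_of_ne hj', zero_mul], Pi.single_eq_same, one_mul,
        heq i]
    · exact hcomb
  exact cullisDet_eq_zero_of_mulVec_eq_zero (fun h0 => by simpa using congrFun h0 j)
    (mulVec_update_neg_one_eq_zero hj)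

/-- if an `n × k` matrix `X` (`n ≥ k ≥ 1`) has two identical columns, or one
of its columns is a linear combination of the other columns, then `det_{n,k}(X) = 0`. -/
theorem cullisDet_eq_zero {F : Type*} [Field F] (n k : ℕ) (hk : 1 ≤ k) (hn : k ≤ n)
    (X : Matrix (Fin n) (Fin k) F)
    (h : (∃ j₁ j₂ : Fin k, j₁ ≠ j₂ ∧ ∀ i, X i j₁ = X i j₂) ∨
      (∃ j : Fin k, ∃ coef : Fin k → F,
        ∀ i, X i j = ∑ j' ∈ Finset.univ.erase j, coef j' * X i j')) :
    cullisDet n k X = 0 :=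
  cullisDet_eq_zero_general n k X h
end

section
/- Let F be a field and n ≥ k ≥ 1 integers. If Y is obtained from an n × k matrix X over F by interchanging two distinct columns, then det_{n,k}(Y) = -det_{n,k}(X). -/
open Matrix Finset

theorem cullisDet_submatrix_id_perm {F : Type*} [Field F] {n k : ℕ}
    (X : Matrix (Fin n) (Fin k) F) (σ : Equiv.Perm (Fin k)) :
    cullisDet n k (X.submatrix id σ) = Equiv.Perm.sign σ * cullisDet n k X := by
  unfold cullisDet
  rw [mul_left_comm (Equiv.Perm.sign σ : F)]
  congr 1
  rw [Finset.mul_sum]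
  refine Finset.sum_congr rfl fun c _ => ?_
  have hswap : (X.submatrix id σ).submatrix c id = (X.submatrix c id).submatrix id σ := rfl
  rw [hswap, det_permute', mul_left_comm]

theorem cullisDet_swap_columns_general {F : Type*} [Field F] (n k : ℕ)
    (X : Matrix (Fin n) (Fin k) F) (j₁ j₂ : Fin k) (hj : j₁ ≠ j₂) :
    cullisDet n k (X.submatrix id (Equiv.swap j₁ j₂)) = - cullisDet n k X := by
  rw [cullisDet_submatrix_id_perm, Equiv.Perm.sign_swap hj]
  push_cast
  ring

/-- interchanging two distinct columns of an `n × k` matrix (`n ≥ k ≥ 1`)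
changes the sign of the Cullis determinant. -/
theorem cullisDet_swap_columns {F : Type*} [Field F] (n k : ℕ) (hk : 1 ≤ k) (hn : k ≤ n)
    (X : Matrix (Fin n) (Fin k) F) (j₁ j₂ : Fin k) (hj : j₁ ≠ j₂) :
    cullisDet n k (X.submatrix id (Equiv.swap j₁ j₂)) = - cullisDet n k X :=
  cullisDet_swap_columns_general n k X j₁ j₂ hj
end

section
/- Let F be a field and n ≥ k ≥ 1 integers. If Y is obtained from an n × k matrix X over F by adding to one column a linear combination of the other columns, then det_{n,k}(Y) = det_{n,k}(X). -/
open Matrix Finset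

theorem Matrix.det_updateCol_add_sum_erase_mul {R ι : Type*} [CommRing R] [Fintype ι]
    [DecidableEq ι] (M : Matrix ι ι R) (j : ι) (coef : ι → R) :
    (M.updateCol j fun i => M i j + ∑ j' ∈ univ.erase j, coef j' * M i j').det = M.det := by
  have hcol : (fun i => M i j + ∑ j' ∈ univ.erase j, coef j' * M i j') =
      fun i => ∑ j', Function.update coef j 1 j' • M i j' := by
    funext i
    rw [← add_sum_erase _ _ (mem_univ j), Function.update_self, one_smul]
    congr 1
    exact sum_congr rfl fun j' hj' => by
      rw [Function.update_of_ne (ne_of_mem_erase hj'), smul_eq_mul]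
  rw [hcol, det_updateCol_sum, Function.update_self, one_smul]

theorem Matrix.submatrix_id_updateCol {α m n l : Type*} [DecidableEq n] (X : Matrix m n α)
    (r : l → m) (j : n) (u : m → α) :
    (X.updateCol j u).submatrix r id = (X.submatrix r id).updateCol j (u ∘ r) := by
  ext i j'
  simp only [submatrix_apply, updateCol_apply, id, Function.comp_apply]

theorem cullisDet_add_linear_combination_general {F : Type*} [Field F] (n k : ℕ)
    (X : Matrix (Fin n) (Fin k) F) (j : Fin k) (coef : Fin k → F) :
    cullisDet n k
      (X.updateCol j
        (fun i => X i j + ∑ j' ∈ Finset.univ.erase j, coef j' * X i j')) =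
      cullisDet n k X := by
  unfold cullisDet
  congr 2 with c
  rw [submatrix_id_updateCol]
  exact congrArg _ (det_updateCol_add_sum_erase_mul (X.submatrix c id) j coef)

/-- adding to a column of an `n × k` matrix (`n ≥ k ≥ 1`) a linear
combination of the other columns does not change the Cullis determinant. -/
theorem cullisDet_add_linear_combination {F : Type*} [Field F] (n k : ℕ) (hk : 1 ≤ k)
    (hn : k ≤ n) (X : Matrix (Fin n) (Fin k) F) (j : Fin k) (coef : Fin k → F) :
    cullisDet n k
      (X.updateCol j
        (fun i => X i j + ∑ j' ∈ Finset.univ.erase j, coef j' * X i j')) =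
      cullisDet n k X :=
  cullisDet_add_linear_combination_general n k X j coef
end
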